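/- arXiv:2504.15964 — 4 statements merged into one kernel-verified Lean document; each statement's English description precedes it below -/
import Mathlib

section
/- Fix naturals n, m, l with 1 ≤ m, l = ⌈log₂ m⌉ and l ≤ n. For a bit string α of length m define f^α : {0,1}^n → {0,1} by f^α(x) = α_{i(x)} if i(x) < m and f^α(x) = 0 otherwise, where i(x) ∈ {0, …, 2^l − 1} is the natural number whose binary digits are the first l bits of x. Then for all bit strings α, α' of length m, the number of x ∈ {0,1}^n with f^α(x) ≠ f^{α'}(x) equals 2^{n−l} times the Hamming distance between α and α'. -/
/-- `idxOf n l x` is the natural number whose binary digits are the first `l` bits of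
the bit string `x : Fin n → Bool`. -/
def idxOf (n l : ℕ) (x : Fin n → Bool) : ℕ :=
  ∑ j : Fin n, if (j : ℕ) < l ∧ x j = true then 2 ^ (j : ℕ) else 0

/-- The index-lookup concept: `lookup n l m α x = α (idxOf n l x)` if `idxOf n l x < m`,
and `false` otherwise. -/
def lookup (n l m : ℕ) (α : Fin m → Bool) (x : Fin n → Bool) : Bool :=
  if h : idxOf n l x < m then α ⟨idxOf n l x, h⟩ else false

/-- Value of a bit string of length `l` as a natural number. -/
def valBits (l : ℕ) (b : Fin l → Bool) : ℕ :=
  ∑ j : Fin l, if b j = true then 2 ^ (j : ℕ) else 0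

/-- `valBits` as an equivalence with `Fin (2 ^ l)`. -/
def bitsEquiv (l : ℕ) : (Fin l → Bool) ≃ Fin (2 ^ l) :=
  (Equiv.arrowCongr (Equiv.refl _) finTwoEquiv.symm).trans finFunctionFinEquiv

lemma bitsEquiv_val (l : ℕ) (b : Fin l → Bool) : (bitsEquiv l b : ℕ) = valBits l b := by
  simp only [bitsEquiv, Equiv.trans_apply, finFunctionFinEquiv_apply, valBits]
  refine Finset.sum_congr rfl fun j _ => ?_
  cases h : b j <;> simp [Equiv.arrowCongr, finTwoEquiv, h]

/-- Splitting a bit string of length `n` into its first `l` bits and the rest. -/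
def splitEquiv (n l : ℕ) (h : l ≤ n) :
    (Fin n → Bool) ≃ (Fin l → Bool) × (Fin (n - l) → Bool) where
  toFun x := (fun j => x (Fin.castLE h j), fun j => x ⟨l + j, by omega⟩)
  invFun p := fun j => if hj : (j : ℕ) < l then p.1 ⟨j, hj⟩ else p.2 ⟨j - l, by omega⟩
  left_inv x := by
    funext j
    dsimp only
    by_cases hj : (j : ℕ) < l
    · rw [dif_pos hj]
      exact congrArg x (Fin.ext rfl)
    · rw [dif_neg hj]
      exact congrArg x (Fin.ext (by simp; omega))
  right_inv p := by
    refine Prod.ext (funext fun j => ?_) (funext fun j => ?_)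
    · show (if hj : ((Fin.castLE h j : Fin n) : ℕ) < l then _ else _) = p.1 j
      rw [dif_pos (by simpa using j.isLt)]
      exact congrArg p.1 (Fin.ext (by simp))
    · show (if hj : l + (j : ℕ) < l then _ else _) = p.2 j
      rw [dif_neg (by omega)]
      exact congrArg p.2 (Fin.ext (by simp))

lemma idxOf_eq_valBits (n l : ℕ) (h : l ≤ n) (x : Fin n → Bool) :
    idxOf n l x = valBits l ((splitEquiv n l h x).1) := by
  unfold idxOf valBits splitEquiv
  simp only [Equiv.coe_fn_mk]
  rw [← Finset.sum_filter_of_ne (s := Finset.univ)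
      (p := fun j : Fin n => (j : ℕ) < l)
      (f := fun j : Fin n => if (j : ℕ) < l ∧ x j = true then 2 ^ (j : ℕ) else 0)
      (fun j _ hne => by by_contra hc; simp [hc] at hne)]
  refine Finset.sum_bij'
    (i := fun (a : Fin n) (ha : a ∈ Finset.univ.filter fun j : Fin n => (j : ℕ) < l) =>
      (⟨(a : ℕ), (Finset.mem_filter.mp ha).2⟩ : Fin l))
    (j := fun (b : Fin l) _ => Fin.castLE h b) ?_ ?_ ?_ ?_ ?_
  · intro a ha; exact Finset.mem_univ _
  · intro b hb; simp [Finset.mem_filter, b.isLt]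
  · intro a ha; exact Fin.ext rfl
  · intro b hb; exact Fin.ext rfl
  · intro a ha
    have hal : (a : ℕ) < l := (Finset.mem_filter.mp ha).2
    have hca : ∀ pf : (a : ℕ) < l, x (Fin.castLE h (⟨(a : ℕ), pf⟩ : Fin l)) = x a :=
      fun pf => congrArg x (Fin.ext rfl)
    dsimp only
    simp only [hca]
    by_cases hxa : x a = true <;> simp [hxa, hal]

/-- Fix `n, m, l` with `1 ≤ m`, `l = ⌈log₂ m⌉` and `l ≤ n`. For bit strings `α, α'` of
length `m`, the number of `x ∈ {0,1}^n` with `f^α(x) ≠ f^{α'}(x)` equals `2^(n−l)` times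
the Hamming distance between `α` and `α'`. -/
theorem card_disagreement_lookup (n m l : ℕ) (hm : 1 ≤ m) (hl : l = Nat.clog 2 m)
    (hln : l ≤ n) (α α' : Fin m → Bool) :
    (Finset.univ.filter
        (fun x : Fin n → Bool => lookup n l m α x ≠ lookup n l m α' x)).card
      = 2 ^ (n - l) * hammingDist α α' := by
  classical
  have hml : m ≤ 2 ^ l := hl ▸ Nat.le_pow_clog one_lt_two m
  -- lookup on indices
  set P : Fin (2 ^ l) → Prop := fun i =>
    (if h : (i : ℕ) < m then α ⟨i, h⟩ else false)
      ≠ (if h : (i : ℕ) < m then α' ⟨i, h⟩ else false) with hP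
  have key : ∀ x : Fin n → Bool,
      (lookup n l m α x ≠ lookup n l m α' x) ↔
        P (bitsEquiv l ((splitEquiv n l hln x).1)) := by
    intro x
    simp only [lookup, hP, idxOf_eq_valBits n l hln x, ← bitsEquiv_val]
  -- step 1: transport along the equivalence
  have h1 : (Finset.univ.filter
        (fun x : Fin n → Bool => lookup n l m α x ≠ lookup n l m α' x)).card
      = (Finset.univ.filter
        (fun p : Fin (2 ^ l) × (Fin (n - l) → Bool) => P p.1)).card := by
    refine Finset.card_equiv
      ((splitEquiv n l hln).trans (Equiv.prodCongr (bitsEquiv l) (Equiv.refl _))) ?_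
    intro x
    simp only [Finset.mem_filter, Finset.mem_univ, true_and, Equiv.trans_apply,
      Equiv.prodCongr_apply, Equiv.coe_refl, Prod.map_fst]
    exact key x
  -- step 2: product structure
  have h2 : (Finset.univ.filter
        (fun p : Fin (2 ^ l) × (Fin (n - l) → Bool) => P p.1))
      = (Finset.univ.filter P) ×ˢ (Finset.univ : Finset (Fin (n - l) → Bool)) := by
    ext p
    simp [Finset.mem_product]
  -- step 3: counting on Fin (2^l)
  have h3 : (Finset.univ.filter P).card = hammingDist α α' := by
    unfold hammingDist
    refine (Finset.card_bij'
      (i := fun (i : Fin (2 ^ l)) (hi : i ∈ Finset.univ.filter P) =>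
        (⟨(i : ℕ), by
          by_contra hc
          have := (Finset.mem_filter.mp hi).2
          simp only [hP, dif_neg hc] at this
          exact this rfl⟩ : Fin m))
      (j := fun (k : Fin m) _ => Fin.castLE hml k) ?_ ?_ ?_ ?_)
    · intro i hi
      have hPi := (Finset.mem_filter.mp hi).2
      by_cases hc : (i : ℕ) < m
      · simp only [hP, dif_pos hc] at hPi
        simp only [Finset.mem_filter, Finset.mem_univ, true_and]
        exact hPi
      · exfalso
        simp only [hP, dif_neg hc] at hPi
        exact hPi rfl
    · intro k hk
      have hkP := (Finset.mem_filter.mp hk).2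
      simp only [Finset.mem_filter, Finset.mem_univ, true_and, hP]
      have hkm : ((Fin.castLE hml k : Fin (2 ^ l)) : ℕ) < m := by simp [k.isLt]
      rw [dif_pos hkm, dif_pos hkm]
      intro hcon
      apply hkP
      have : (⟨((Fin.castLE hml k : Fin (2 ^ l)) : ℕ), hkm⟩ : Fin m) = k := Fin.ext (by simp)
      rwa [this] at hcon
    · intro i hi; exact Fin.ext (by simp)
    · intro k hk; exact Fin.ext (by simp)
  rw [h1, h2, Finset.card_product, h3]
  simp [mul_comm]
end

section
/- Fix naturals n, m, l with 1 ≤ m, l = ⌈log₂ m⌉ and l ≤ n. For a bit string α of length m define f^α : {0,1}^n → {0,1} by f^α(x) = α_{i(x)} if i(x) < m and f^α(x) = 0 otherwise, where i(x) ∈ {0, …, 2^l − 1} is the natural number whose binary digits are the first l bits of x. Then for all bit strings α, α' of length m one has 2·m·|{x ∈ {0,1}^n : f^α(x) ≠ f^{α'}(x)}| ≥ 2^n·(Hamming distance between α and α'); equivalently, the expected disagreement of f^α and f^{α'} under the uniform distribution on {0,1}^n is at least (1/2)·d(α, α'), where d(α, α') = |{i : α_i ≠ α'_i}|/m is the normalized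 Hamming distance. Hence the family {f^α} is average-case-smooth with constant C = 1/2. -/
lemma card_gfun_fiber (l i : ℕ) (hi : i < 2 ^ l) :
    (Finset.univ.filter
      (fun y : Fin l → Bool => (∑ j : Fin l, if y j = true then 2 ^ (j:ℕ) else 0) = i)).card
      = 1 := by
  set G : (Fin l → Bool) ≃ Fin (2 ^ l) :=
    (Equiv.arrowCongr (Equiv.refl (Fin l)) finTwoEquiv.symm).trans finFunctionFinEquiv with hG
  have hGval : ∀ y : Fin l → Bool,
      (∑ j : Fin l, if y j = true then 2 ^ (j:ℕ) else 0) = ((G y : Fin (2^l)) : ℕ) := by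
    intro y
    simp [hG, finFunctionFinEquiv_apply, Equiv.arrowCongr]
    congr 1; funext j; cases h : y j <;> simp [h, finTwoEquiv]
  rw [Finset.card_eq_one]
  refine ⟨G.symm ⟨i, hi⟩, ?_⟩
  ext y
  simp only [Finset.mem_filter, Finset.mem_univ, true_and, Finset.mem_singleton, hGval]
  constructor
  · intro h
    have : G y = ⟨i, hi⟩ := Fin.ext h
    exact G.injective (by simp [this])
  · intro h; subst h; simp

lemma card_idxOf_fiber (n l : ℕ) (hln : l ≤ n) (i : ℕ) (hi : i < 2 ^ l) :
    (Finset.univ.filter (fun x : Fin n → Bool => idxOf n l x = i)).card = 2 ^ (n - l) := by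
  have hnl : n = l + (n - l) := by omega
  set E : (Fin n → Bool) ≃ (Fin l → Bool) × (Fin (n - l) → Bool) :=
    (Equiv.arrowCongr ((finCongr hnl).trans finSumFinEquiv.symm) (Equiv.refl Bool)).trans
      (Equiv.sumArrowEquivProdArrow _ _ _) with hE
  have hE1 : ∀ (x : Fin n → Bool) (j : Fin l),
      (E x).1 j = x (Fin.castLE hln j) := by
    intro x j
    simp only [hE, Equiv.trans_apply, Equiv.sumArrowEquivProdArrow,
      Equiv.arrowCongr_apply, Equiv.coe_fn_mk, Function.comp_apply, Equiv.refl_apply]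
    congr 1
  have hidx : ∀ x : Fin n → Bool,
      idxOf n l x = ∑ j : Fin l, if (E x).1 j = true then 2 ^ (j:ℕ) else 0 := by
    intro x
    have h1 : idxOf n l x
        = ∑ j ∈ Finset.univ.filter (fun j : Fin n => (j : ℕ) < l),
            (if x j = true then 2 ^ (j:ℕ) else 0) := by
      rw [Finset.sum_filter]
      unfold idxOf
      apply Finset.sum_congr rfl
      intro j _
      split_ifs <;> tauto
    have h2 : Finset.univ.filter (fun j : Fin n => (j : ℕ) < l)
        = Finset.univ.map (Fin.castLEEmb hln) := by
      ext j
      simp only [Finset.mem_filter, Finset.mem_univ, true_and, Finset.mem_map]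
      constructor
      · intro h
        refine ⟨⟨j, h⟩, ?_⟩
        apply Fin.ext; simp
      · rintro ⟨a, rfl⟩
        simpa using a.2
    rw [h1, h2, Finset.sum_map]
    apply Finset.sum_congr rfl
    intro j _
    rw [hE1]
    rfl
  have hcard : (Finset.univ.filter (fun x : Fin n → Bool => idxOf n l x = i)).card
      = (Finset.univ.filter
          (fun p : (Fin l → Bool) × (Fin (n - l) → Bool) =>
            (∑ j : Fin l, if p.1 j = true then 2 ^ (j:ℕ) else 0) = i)).card := by
    apply Finset.card_bij' (fun x _ => E x) (fun p _ => E.symm p)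
    · intro x hx
      simp only [Finset.mem_filter, Finset.mem_univ, true_and] at hx ⊢
      rw [← hidx]; exact hx
    · intro p hp
      simp only [Finset.mem_filter, Finset.mem_univ, true_and] at hp ⊢
      rw [hidx, E.apply_symm_apply]; exact hp
    · intro x _; exact E.symm_apply_apply x
    · intro p _; exact E.apply_symm_apply p
  rw [hcard]
  have : (Finset.univ.filter
      (fun p : (Fin l → Bool) × (Fin (n - l) → Bool) =>
        (∑ j : Fin l, if p.1 j = true then 2 ^ (j:ℕ) else 0) = i))
      = (Finset.univ.filter
          (fun y : Fin l → Bool => (∑ j : Fin l, if y j = true then 2 ^ (j:ℕ) else 0) = i))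
        ×ˢ (Finset.univ : Finset (Fin (n - l) → Bool)) := by
    ext p
    simp [Finset.mem_product]
  rw [this, Finset.card_product, card_gfun_fiber l i hi, one_mul]
  simp [Finset.card_univ]

/-- Fix `n, m, l` with `1 ≤ m`, `l = ⌈log₂ m⌉` and `l ≤ n`. For all bit strings `α, α'`
of length `m`: `2·m·|{x : f^α(x) ≠ f^{α'}(x)}| ≥ 2^n·(Hamming distance of α, α')`,
i.e. the expected disagreement of `f^α` and `f^{α'}` under the uniform distribution on
`{0,1}^n` is at least `(1/2)` times the normalized Hamming distance: the family `{f^α}`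
is average-case-smooth with constant `C = 1/2`. -/
theorem lookup_average_case_smooth (n m l : ℕ) (hm : 1 ≤ m) (hl : l = Nat.clog 2 m)
    (hln : l ≤ n) (α α' : Fin m → Bool) :
    2 ^ n * hammingDist α α' ≤
      2 * m * (Finset.univ.filter
        (fun x : Fin n → Bool => lookup n l m α x ≠ lookup n l m α' x)).card := by
  classical
  set S := Finset.univ.filter
    (fun x : Fin n → Bool => lookup n l m α x ≠ lookup n l m α' x) with hS
  set D := Finset.univ.filter (fun i : Fin m => α i ≠ α' i) with hD
  have hmd : hammingDist α α' = D.card := rfl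
  have hm2 : m ≤ 2 ^ l := by rw [hl]; exact Nat.le_pow_clog (by norm_num) m
  set F : (Fin n → Bool) → Fin m :=
    fun x => if h : idxOf n l x < m then ⟨idxOf n l x, h⟩ else ⟨0, hm⟩ with hF
  have hmem : ∀ x ∈ S, idxOf n l x < m := by
    intro x hx
    by_contra h
    simp only [hS, Finset.mem_filter, Finset.mem_univ, true_and] at hx
    unfold lookup at hx
    rw [dif_neg h, dif_neg h] at hx
    exact hx rfl
  have hFD : ∀ x ∈ S, F x ∈ D := by
    intro x hx
    have h := hmem x hx
    simp only [hS, Finset.mem_filter, Finset.mem_univ, true_and] at hx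
    unfold lookup at hx
    rw [dif_pos h, dif_pos h] at hx
    simp only [hD, hF, Finset.mem_filter, Finset.mem_univ, true_and, dif_pos h]
    exact hx
  have hsum : S.card = ∑ i ∈ D, (S.filter (fun x => F x = i)).card :=
    Finset.card_eq_sum_card_fiberwise hFD
  have hfiber : ∀ i ∈ D, (S.filter (fun x => F x = i))
      = Finset.univ.filter (fun x : Fin n → Bool => idxOf n l x = (i : ℕ)) := by
    intro i hi
    ext x
    simp only [Finset.mem_filter, Finset.mem_univ, true_and]
    constructor
    · rintro ⟨hxS, hFx⟩
      have h := hmem x hxS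
      simp only [hF, dif_pos h] at hFx
      rw [← hFx]
    · intro hidx
      have h : idxOf n l x < m := hidx ▸ i.2
      have heq : (⟨idxOf n l x, h⟩ : Fin m) = i := Fin.ext hidx
      simp only [hD, Finset.mem_filter, Finset.mem_univ, true_and] at hi
      constructor
      · simp only [hS, Finset.mem_filter, Finset.mem_univ, true_and]
        unfold lookup
        rw [dif_pos h, dif_pos h, heq]
        exact hi
      · simp only [hF, dif_pos h, heq]
  have hScard : S.card = D.card * 2 ^ (n - l) := by
    rw [hsum]
    rw [Finset.sum_congr rfl (fun i hi => by
      rw [hfiber i hi, card_idxOf_fiber n l hln (i : ℕ) (lt_of_lt_of_le i.2 hm2)])]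
    rw [Finset.sum_const, smul_eq_mul]
  have h2l : 2 ^ l ≤ 2 * m := by
    rcases eq_or_lt_of_le hm with h1 | h1
    · have : l = 0 := by rw [hl, ← h1]; simp
      subst this; simpa using by omega
    · have hpred : 2 ^ (l - 1) < m := by
        rw [hl]; exact Nat.pow_pred_clog_lt_self (by norm_num) h1
      rcases Nat.eq_zero_or_pos l with h0 | h0
      · subst h0; simp; omega
      · have : 2 ^ l = 2 * 2 ^ (l - 1) := by
          rw [← pow_succ']; congr 1; omega
        omega
  rw [hmd, hScard]
  have hn : (2:ℕ) ^ n = 2 ^ l * 2 ^ (n - l) := by rw [← pow_add]; congr 1; omega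
  calc 2 ^ n * D.card = 2 ^ l * (2 ^ (n - l) * D.card) := by rw [hn]; ring
    _ ≤ 2 * m * (2 ^ (n - l) * D.card) := Nat.mul_le_mul_right _ h2l
    _ = 2 * m * (D.card * 2 ^ (n - l)) := by ring
end

section
/- Let X be a finite type, let P be a nonempty finite subset of X, let f : X → Bool, and let ε ≥ 0 be a real number. Define π : X × Bool → ℝ by π(x, b) = 1/|P| if x ∈ P and b = f(x), and π(x, b) = 0 otherwise. Let q : X × Bool → ℝ be nonnegative with total sum 1. If the total variation distance satisfies (1/2)·∑_{(x,b) ∈ X × Bool} |q(x, b) − π(x, b)| ≤ ε, then the set of x ∈ P with q(x, f(x)) ≤ (2/3)·(q(x, true) + q(x, false)) has cardinality at most 6·ε·|P|. -/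
open scoped Classical in
/-- Let `X` be finite, `P ⊆ X` nonempty, `f : X → Bool`, `ε ≥ 0`. Let
`π (x, b) = 1/|P|` if `x ∈ P ∧ b = f x` and `0` otherwise, and let `q` be a
probability distribution on `X × Bool` (nonnegative, summing to `1`). If the total
variation distance `(1/2)·∑ |q − π| ≤ ε`, then the set of `x ∈ P` with
`q (x, f x) ≤ (2/3)·(q (x, true) + q (x, false))` has cardinality at most `6·ε·|P|`. -/
theorem approximate_sampler_few_bad_points {X : Type*} [Fintype X]
    (P : Finset X) (hP : P.Nonempty) (f : X → Bool) (ε : ℝ) (hε : 0 ≤ ε)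
    (q : X × Bool → ℝ) (hq0 : ∀ p, 0 ≤ q p) (hq1 : ∑ p : X × Bool, q p = 1)
    (htv : (1 / 2) * ∑ p : X × Bool,
        |q p - (if p.1 ∈ P ∧ p.2 = f p.1 then (1 : ℝ) / P.card else 0)| ≤ ε) :
    ((P.filter (fun x =>
        q (x, f x) ≤ (2 / 3) * (q (x, true) + q (x, false)))).card : ℝ)
      ≤ 6 * ε * P.card := by
  set N : ℝ := (P.card : ℝ) with hN
  have hN0 : 0 < N := by
    simp only [hN]
    exact_mod_cast Finset.card_pos.mpr hP
  set S := P.filter (fun x =>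
      q (x, f x) ≤ (2 / 3) * (q (x, true) + q (x, false))) with hS
  set F : X → ℝ := fun x => ∑ b : Bool,
      |q (x, b) - (if x ∈ P ∧ b = f x then (1 : ℝ) / P.card else 0)| with hF
  have hFnn : ∀ x, 0 ≤ F x := fun x =>
    Finset.sum_nonneg fun b _ => abs_nonneg _
  -- each bad point contributes at least 1/(2N)
  have hkey : ∀ x ∈ S, 1 / (2 * N) ≤ F x := by
    intro x hx
    rw [hS, Finset.mem_filter] at hx
    obtain ⟨hxP, hbad⟩ := hx
    have ha := hq0 (x, f x)
    have hb := hq0 (x, !(f x))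
    have hsum : q (x, true) + q (x, false) = q (x, f x) + q (x, !(f x)) := by
      cases h : f x <;> simp [h] <;> ring
    rw [hsum] at hbad
    have hab : q (x, f x) ≤ 2 * q (x, !(f x)) := by linarith
    have hFx : F x = |q (x, f x) - 1 / N| + q (x, !(f x)) := by
      rw [hF]
      cases h : f x <;>
        simp [Fintype.sum_bool, h, hxP, abs_of_nonneg (hq0 _)] <;> ring
    rw [hFx]
    rcases le_or_gt (q (x, f x)) (1 / N) with hc | hc
    · have : 1 / N - q (x, f x) ≤ |q (x, f x) - 1 / N| := by
        rw [abs_sub_comm]; exact le_abs_self _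
      have h2 : 1 / (2 * N) = 1 / N - 1 / (2 * N) := by field_simp; ring
      linarith
    · have : q (x, f x) - 1 / N ≤ |q (x, f x) - 1 / N| := le_abs_self _
      have h2 : 1 / (2 * N) ≤ q (x, f x) / 2 := by
        rw [div_le_div_iff₀ (by linarith) (by norm_num)]
        calc (1 : ℝ) * 2 = 2 * N * (1 / N) := by field_simp
        _ ≤ 2 * N * q (x, f x) := by
            apply mul_le_mul_of_nonneg_left hc.le; linarith
        _ = q (x, f x) * (2 * N) := by ring
      linarith
  -- the total ℓ¹ sum equals ∑ x, F x
  have hsplit : ∑ p : X × Bool,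
      |q p - (if p.1 ∈ P ∧ p.2 = f p.1 then (1 : ℝ) / P.card else 0)|
      = ∑ x : X, F x := by
    rw [Fintype.sum_prod_type]
  have hl1 : ∑ x : X, F x ≤ 2 * ε := by
    rw [← hsplit]; linarith
  have hlower : (S.card : ℝ) * (1 / (2 * N)) ≤ ∑ x : X, F x := by
    calc (S.card : ℝ) * (1 / (2 * N)) = ∑ _x ∈ S, 1 / (2 * N) := by
          rw [Finset.sum_const, nsmul_eq_mul]
    _ ≤ ∑ x ∈ S, F x := Finset.sum_le_sum hkey
    _ ≤ ∑ x : X, F x :=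
        Finset.sum_le_sum_of_subset_of_nonneg (Finset.subset_univ S)
          (fun x _ _ => hFnn x)
  have hfinal : (S.card : ℝ) * (1 / (2 * N)) ≤ 2 * ε := le_trans hlower hl1
  have : (S.card : ℝ) ≤ 4 * ε * N := by
    rw [mul_one_div, div_le_iff₀ (by linarith)] at hfinal
    calc (S.card : ℝ) ≤ 2 * ε * (2 * N) := hfinal
    _ = 4 * ε * N := by ring
  have hεN : 0 ≤ ε * N := mul_nonneg hε hN0.le
  calc (S.card : ℝ) ≤ 4 * ε * N := this
  _ ≤ 6 * ε * N := by nlinarith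
end

section
/- Let X be a finite type, let B, E, c be naturals with c ≥ 1, let f : X → Bool, and let G be a finite set of datasets of size B over X each of which has at most E mislabelled entries relative to f. If N(x) ≥ c for every x ∈ X, then 2·c·|{x ∈ X : 5·W(x) ≥ 2·N(x)}| ≤ 5·E·|G|; in particular, the number of points that are mislabelled in at least a 2/5 fraction of their occurrences is at most 5·E·|G|/(2·c). -/
/-- `occCount G x`: the number of occurrences of `x` as an input across the datasets
in `G` (each dataset is a function `Fin B → X × Bool`). -/
def occCount {X : Type*} [DecidableEq X] {B : ℕ}
    (G : Finset (Fin B → X × Bool)) (x : X) : ℕ :=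
  ∑ g ∈ G, (Finset.univ.filter (fun i : Fin B => (g i).1 = x)).card

/-- `wrongCount f G x`: the number of mislabelled (relative to `f`) occurrences of `x`
across the datasets in `G`. -/
def wrongCount {X : Type*} [DecidableEq X] {B : ℕ} (f : X → Bool)
    (G : Finset (Fin B → X × Bool)) (x : X) : ℕ :=
  ∑ g ∈ G, (Finset.univ.filter (fun i : Fin B => (g i).1 = x ∧ (g i).2 ≠ f x)).card

/-- If each dataset in `G` (of size `B` over `X`) has at most `E` mislabelled entries
relative to `f`, and every `x ∈ X` occurs at least `c ≥ 1` times across `G`, then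
`2·c·|{x : 5·W(x) ≥ 2·N(x)}| ≤ 5·E·|G|`: the number of points mislabelled in at least
a `2/5` fraction of their occurrences is at most `5·E·|G|/(2·c)`. -/
theorem card_bad_points_le {X : Type*} [Fintype X] [DecidableEq X] (B E c : ℕ)
    (hc : 1 ≤ c) (f : X → Bool) (G : Finset (Fin B → X × Bool))
    (hE : ∀ g ∈ G, (Finset.univ.filter (fun i : Fin B => (g i).2 ≠ f (g i).1)).card ≤ E)
    (hN : ∀ x : X, c ≤ occCount G x) :
    2 * c * (Finset.univ.filter
        (fun x : X => 2 * occCount G x ≤ 5 * wrongCount f G x)).card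
      ≤ 5 * E * G.card := by
  set bad := Finset.univ.filter
      (fun x : X => 2 * occCount G x ≤ 5 * wrongCount f G x) with hbad
  have hsum : ∑ x : X, wrongCount f G x
      = ∑ g ∈ G, (Finset.univ.filter (fun i : Fin B => (g i).2 ≠ f (g i).1)).card := by
    unfold wrongCount
    rw [Finset.sum_comm]
    refine Finset.sum_congr rfl fun g _ => ?_
    simp_rw [Finset.card_filter]
    rw [Finset.sum_comm]
    refine Finset.sum_congr rfl fun i _ => ?_
    rw [Finset.sum_eq_single ((g i).1)]
    · simp
    · intro x _ hx
      simp [Ne.symm hx]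
    · simp
  have h1 : 2 * c * bad.card ≤ 5 * ∑ x ∈ bad, wrongCount f G x := by
    rw [Finset.mul_sum]
    calc 2 * c * bad.card = ∑ _x ∈ bad, 2 * c := by
          rw [Finset.sum_const, smul_eq_mul, mul_comm]
      _ ≤ ∑ x ∈ bad, 5 * wrongCount f G x := by
          refine Finset.sum_le_sum fun x hx => ?_
          rw [hbad, Finset.mem_filter] at hx
          exact le_trans (Nat.mul_le_mul_left 2 (hN x)) hx.2
  have h2 : ∑ x ∈ bad, wrongCount f G x ≤ ∑ x : X, wrongCount f G x :=
    Finset.sum_le_sum_of_subset (Finset.filter_subset _ _)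
  have h3 : ∑ x : X, wrongCount f G x ≤ E * G.card := by
    rw [hsum]
    calc ∑ g ∈ G, (Finset.univ.filter (fun i : Fin B => (g i).2 ≠ f (g i).1)).card
        ≤ ∑ _g ∈ G, E := Finset.sum_le_sum hE
      _ = E * G.card := by rw [Finset.sum_const, smul_eq_mul, mul_comm]
  calc 2 * c * bad.card ≤ 5 * ∑ x ∈ bad, wrongCount f G x := h1
    _ ≤ 5 * (E * G.card) := by
        exact Nat.mul_le_mul_left 5 (le_trans h2 h3)
    _ = 5 * E * G.card := by ring
end
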